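/- Let G be a finite abelian group with minimal number of generators r ≤ n. Choose τ₁,…,τₙ ∈ G with G the internal direct product ⟨τ₁⟩ × ⋯ × ⟨τₙ⟩, where |τ_{i+1}| divides |τ_i| for 1 ≤ i < n (so |τ_i| = 1 for r < i ≤ n). Then every orbit of the right GLₙ(ℤ)-action on the set of generating n-tuples of G contains a tuple of the form (τ₁,…,τ_{n-1},τₙ^p) with 0 ≤ p ≤ ⌊|τₙ|/2⌋ and gcd(p,|τₙ|) = 1, and distinct such p give distinct orbits. -/

import Mathlib

/-!
Write a tuple as `σ = τ^A` for an integer matrix `A`. Then `σ^P = τ^(AP)`, and since `G` is the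
direct product of the `⟨τᵢ⟩`, `τ^A = τ^B` exactly when row `i` of `A` and of `B` agree modulo
`dᵢ = |τᵢ|`; `σ` generates `G` exactly when `x ↦ Ax` is onto `∏ ℤ/dᵢ`. Column operations
(Euclid's algorithm) make row `0` of `A` congruent to `e₀` modulo `d₀`. As every `dᵢ` divides
`d₀`, the lower right block is then again onto `∏_{i ≥ 1} ℤ/dᵢ`; this lets one clear the first
column and reduce the block by induction, ending at `diag(1, …, 1, a)` with `a` a unit modulo
`dₙ`, and a sign change brings `a` into `[0, dₙ/2]`. Conversely, reducing
`diag(1, …, 1, p₁) P ≡ diag(1, …, 1, p₂)` modulo `dₙ` and taking determinants gives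
`p₂ ≡ ±p₁ (mod dₙ)`, hence `p₁ = p₂`.
-/

open Matrix Function

theorem Finset.prod_zpow_eq_zpow_sum {G : Type*} [CommGroup G] {α : Type*} (s : Finset α)
    (f : α → ℤ) (a : G) : ∏ i ∈ s, a ^ f i = a ^ ∑ i ∈ s, f i := by
  induction s using Finset.cons_induction with
  | empty => simp
  | cons i s _ ih => rw [Finset.sum_cons, Finset.prod_cons, _root_.zpow_add, ih]

theorem vecMul_transvection {R : Type*} [CommRing R] {ι : Type*} [Fintype ι] [DecidableEq ι]
    (v : ι → R) (i j : ι) (c : R) :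
    v ᵥ* transvection i j c = v + Pi.single j (v i * c) := by
  rw [transvection, vecMul_add, vecMul_one]
  ext k
  by_cases hk : j = k <;> simp [vecMul, dotProduct, single_apply, eq_comm, hk]

section ColumnReduction

variable {ι : Type*} [Fintype ι] [DecidableEq ι]

theorem exists_det_eq_one_vecMul_apply_eq_zero {i j : ι} (hij : i ≠ j) (v : ι → ℤ) :
    ∃ P : Matrix ι ι ℤ, P.det = 1 ∧ (v ᵥ* P) j = 0 ∧
      ∀ k, k ≠ i → k ≠ j → (v ᵥ* P) k = v k := by
  induction hN : (v j).natAbs using Nat.strong_induction_on generalizing v with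
  | _ N ih =>
    obtain hv | hv := eq_or_ne (v j) 0
    · exact ⟨1, det_one, by simpa, fun k _ _ => by simp⟩
    -- Euclid's step `(a, b) ↦ (b, -(a % b))` on the coordinates `(i, j)`
    set T := transvection j i (1 - v i / v j) * transvection i j (-1) * transvection j i 1
    have hT : ∀ k, (v ᵥ* T) k =
        if k = i then v j else if k = j then -(v i % v j) else v k := by
      intro k
      simp only [T, ← vecMul_vecMul, vecMul_transvection]
      by_cases hki : k = i
      · rw [hki]
        simp only [Pi.add_apply, Pi.single_eq_same, Pi.single_eq_of_ne hij,
          Pi.single_eq_of_ne hij.symm, if_true]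
        ring
      · by_cases hkj : k = j
        · rw [hkj, Int.emod_def]
          simp only [Pi.add_apply, Pi.single_eq_same, Pi.single_eq_of_ne hij.symm,
            if_neg hij.symm, if_true]
          ring
        · simp [hki, hkj]
    have hlt : (-(v i % v j)).natAbs < N := by
      have := Int.emod_nonneg (v i) hv
      have := Int.emod_lt (v i) hv
      omega
    obtain ⟨Q, hQ, hQj, hQk⟩ := ih _ hlt (v ᵥ* T) (by rw [hT, if_neg hij.symm, if_pos rfl])
    refine ⟨T * Q, by simp [T, hQ, hij, hij.symm], by rwa [← vecMul_vecMul],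
      fun k hki hkj => ?_⟩
    rw [← vecMul_vecMul, hQk k hki hkj, hT, if_neg hki, if_neg hkj]

theorem exists_det_eq_one_vecMul_eq_single (v : ι → ℤ) (i : ι) :
    ∃ P : Matrix ι ι ℤ, P.det = 1 ∧ ∃ g, v ᵥ* P = Pi.single i g := by
  suffices ∀ s : Finset ι, ∃ P : Matrix ι ι ℤ, P.det = 1 ∧ ∀ k ∈ s, k ≠ i → (v ᵥ* P) k = 0 by
    obtain ⟨P, hP, hzero⟩ := this Finset.univ
    refine ⟨P, hP, (v ᵥ* P) i, funext fun k => ?_⟩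
    obtain rfl | hk := eq_or_ne k i
    · simp
    · simp [hk, hzero k (Finset.mem_univ k) hk]
  intro s
  induction s using Finset.induction_on with
  | empty => exact ⟨1, det_one, by simp⟩
  | insert j s _ ih =>
    obtain ⟨P, hP, hzero⟩ := ih
    obtain rfl | hji := eq_or_ne j i
    · exact ⟨P, hP, fun k hk hki => hzero k ((Finset.mem_insert.1 hk).resolve_left hki) hki⟩
    obtain ⟨Q, hQ, hQj, hQk⟩ := exists_det_eq_one_vecMul_apply_eq_zero hji.symm (v ᵥ* P)
    refine ⟨P * Q, by rw [det_mul, hP, hQ, one_mul], fun k hk hki => ?_⟩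
    rw [← vecMul_vecMul]
    obtain rfl | hkj := eq_or_ne k j
    · exact hQj
    · rw [hQk k hki hkj]
      exact hzero k ((Finset.mem_insert.1 hk).resolve_left hkj) hki

theorem exists_det_eq_one_vecMul_modEq_single {i j : ι} (hij : i ≠ j) (c : ℤ) (v : ι → ℤ)
    (hv : ∃ x, v ⬝ᵥ x ≡ 1 [ZMOD c]) :
    ∃ P : Matrix ι ι ℤ, P.det = 1 ∧ ∀ k, (v ᵥ* P) k ≡ (Pi.single i 1 : ι → ℤ) k [ZMOD c] := by
  obtain ⟨x, hx⟩ := hv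
  obtain ⟨P, hP, g, hg⟩ := exists_det_eq_one_vecMul_eq_single v i
  obtain ⟨y, hgy⟩ : ∃ y, g * y ≡ 1 [ZMOD c] := by
    have hPinv : P * P⁻¹ = 1 := mul_nonsing_inv P (by simp [hP])
    rw [← one_mulVec x, ← hPinv, ← mulVec_mulVec, dotProduct_mulVec, hg,
      single_dotProduct] at hx
    exact ⟨_, hx⟩
  -- `(g, 0) ↦ (g, g y) ↦ (g + (1 - g) g y, g y) ↦ (g + (1 - g) g y, g y - g - (1 - g) g y)`,
  -- which is `(1, 0)` modulo `c` because `g y ≡ 1`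
  set T := transvection i j y * transvection j i (1 - g) * transvection i j (-1)
  refine ⟨P * T, by simp [T, hP, hij, hij.symm], fun k => ?_⟩
  rw [← vecMul_vecMul, hg]
  simp only [T, ← vecMul_vecMul, vecMul_transvection]
  rw [Int.modEq_iff_dvd] at hgy ⊢
  by_cases hki : k = i
  · rw [hki]
    simp only [Pi.add_apply, Pi.single_eq_same, Pi.single_eq_of_ne hij,
      Pi.single_eq_of_ne hij.symm]
    exact (hgy.mul_left (1 - g)).trans (dvd_of_eq (by ring))
  · by_cases hkj : k = j
    · rw [hkj]
      simp only [Pi.add_apply, Pi.single_eq_same, Pi.single_eq_of_ne hij,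
        Pi.single_eq_of_ne hij.symm]
      exact (hgy.mul_left g).trans (dvd_of_eq (by ring))
    · simp [hki, hkj]

end ColumnReduction

section RowCongruences

variable {ι κ : Type*}

def ModEqRows (d : ι → ℕ) (A B : Matrix ι κ ℤ) : Prop :=
  ∀ i j, A i j ≡ B i j [ZMOD d i]

def SurjModRows [Fintype κ] (d : ι → ℕ) (A : Matrix ι κ ℤ) : Prop :=
  ∀ t : ι → ℤ, ∃ x : κ → ℤ, ∀ i, (A *ᵥ x) i ≡ t i [ZMOD d i]

theorem ModEqRows.of_dvd {d e : ι → ℕ} (hed : ∀ i, e i ∣ d i) {A B : Matrix ι κ ℤ}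
    (h : ModEqRows d A B) : ModEqRows e A B :=
  fun i j => (h i j).of_dvd (Int.natCast_dvd_natCast.2 (hed i))

theorem SurjModRows.mul_of_isUnit_det [Fintype κ] [DecidableEq κ] {d : ι → ℕ}
    {A : Matrix ι κ ℤ} (hA : SurjModRows d A) {P : Matrix κ κ ℤ} (hP : IsUnit P.det) :
    SurjModRows d (A * P) := by
  intro t
  obtain ⟨x, hx⟩ := hA t
  refine ⟨P⁻¹ *ᵥ x, fun i => ?_⟩
  rw [mulVec_mulVec, Matrix.mul_nonsing_inv_cancel_right _ _ hP]
  exact hx i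

theorem dotProduct_modEq_of_modEq_single [Fintype κ] [DecidableEq κ] {c : ℤ} {v : κ → ℤ}
    {k : κ} (hv : ∀ l, v l ≡ (Pi.single k 1 : κ → ℤ) l [ZMOD c]) (y : κ → ℤ) :
    v ⬝ᵥ y ≡ y k [ZMOD c] :=
  calc v ⬝ᵥ y ≡ Pi.single k 1 ⬝ᵥ y [ZMOD c] :=
        Int.ModEq.sum fun l _ => (hv l).mul_right (y l)
    _ = y k := by simp

end RowCongruences

theorem SurjModRows.submatrix_succ {m : ℕ} {d : Fin (m + 1) → ℕ}
    {B : Matrix (Fin (m + 1)) (Fin (m + 1)) ℤ} (hB : SurjModRows d B)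
    (hd : ∀ i : Fin m, d i.succ ∣ d 0)
    (hrow : ∀ l, B 0 l ≡ (Pi.single 0 1 : Fin (m + 1) → ℤ) l [ZMOD d 0]) :
    SurjModRows (fun i => d i.succ) (B.submatrix Fin.succ Fin.succ) := by
  intro t
  obtain ⟨x, hx⟩ := hB (Fin.cons 0 t)
  have hx0 : x 0 ≡ 0 [ZMOD d 0] := (dotProduct_modEq_of_modEq_single hrow x).symm.trans (hx 0)
  refine ⟨Fin.tail x, fun i => ?_⟩
  have hxi := hx i.succ
  rw [Fin.cons_succ, mulVec, dotProduct, Fin.sum_univ_succ] at hxi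
  have hterm : B i.succ 0 * x 0 ≡ 0 [ZMOD d i.succ] := by
    simpa using ((hx0.of_dvd (Int.natCast_dvd_natCast.2 (hd i))).mul_left (B i.succ 0))
  simpa [mulVec, dotProduct, Fin.tail] using hterm.add_right _ |>.symm.trans hxi

def bordered {m : ℕ} (k : Fin m → ℤ) (Q : Matrix (Fin m) (Fin m) ℤ) :
    Matrix (Fin (m + 1)) (Fin (m + 1)) ℤ :=
  Matrix.of (vecCons (vecCons 1 0) fun i => vecCons (k i) (Q i))

section Bordered

variable {m : ℕ} (k : Fin m → ℤ) (Q : Matrix (Fin m) (Fin m) ℤ)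

theorem bordered_zero_apply (j : Fin (m + 1)) :
    bordered k Q 0 j = (Pi.single 0 1 : Fin (m + 1) → ℤ) j := by
  cases j using Fin.cases <;> simp [bordered]

theorem det_bordered : (bordered k Q).det = Q.det := by
  have hsub : (bordered k Q).submatrix Fin.succ Fin.succ = Q := rfl
  rw [det_succ_row_zero, Fin.sum_univ_succ]
  simp [bordered_zero_apply, hsub]

theorem mul_bordered_apply_zero {ι : Type*} (B : Matrix ι (Fin (m + 1)) ℤ) (i : ι) :
    (B * bordered k Q) i 0 = B i 0 + ∑ l, B i l.succ * k l := by
  simp [mul_apply, Fin.sum_univ_succ, bordered]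

theorem mul_bordered_apply_succ {ι : Type*} (B : Matrix ι (Fin (m + 1)) ℤ) (i : ι)
    (j : Fin m) : (B * bordered k Q) i j.succ = ∑ l, B i l.succ * Q l j := by
  simp [mul_apply, Fin.sum_univ_succ, bordered]

end Bordered

theorem exists_unit_mul_modEq_coprime_le_half {N : ℕ} [NeZero N] {a x : ℤ}
    (h : a * x ≡ 1 [ZMOD N]) :
    ∃ (u : ℤˣ) (p : ℕ), p ≤ N / 2 ∧ p.Coprime N ∧ a * u ≡ p [ZMOD N] := by
  set b : ZMod N := (a : ZMod N)
  have hb : IsUnit b :=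
    .of_mul_eq_one (x : ZMod N) (by simpa [b] using (ZMod.intCast_eq_intCast_iff _ _ _).2 h)
  obtain ⟨u, hu⟩ : ∃ u : ℤˣ, b * (u : ℤ) = (b.valMinAbs.natAbs : ℤ) := by
    rcases Int.natAbs_eq b.valMinAbs with hv | hv
    · exact ⟨1, by rw [← hv]; simp [ZMod.coe_valMinAbs]⟩
    · refine ⟨-1, ?_⟩
      rw [show (b.valMinAbs.natAbs : ℤ) = -b.valMinAbs by omega]
      simp [ZMod.coe_valMinAbs]
  refine ⟨u, b.valMinAbs.natAbs, ZMod.natAbs_valMinAbs_le b, ?_, ?_⟩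
  · rw [← ZMod.isUnit_iff_coprime]
    have := hb.mul (u.isUnit.map (Int.castRingHom (ZMod N)))
    simpa [hu] using this
  · rw [← ZMod.intCast_eq_intCast_iff, Int.cast_mul]
    exact hu

theorem exists_isUnit_det_mul_modEqRows_diagonal {m : ℕ} (d : Fin (m + 1) → ℕ)
    (hd : 0 < d (Fin.last m)) (hchain : ∀ i j, i ≤ j → d j ∣ d i)
    (A : Matrix (Fin (m + 1)) (Fin (m + 1)) ℤ) (hA : SurjModRows d A) :
    ∃ (P : Matrix (Fin (m + 1)) (Fin (m + 1)) ℤ) (p : ℕ), IsUnit P.det ∧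
      p ≤ d (Fin.last m) / 2 ∧ p.Coprime (d (Fin.last m)) ∧
      ModEqRows d (A * P) (diagonal (update 1 (Fin.last m) (p : ℤ))) := by
  induction m with
  | zero =>
    have : NeZero (d 0) := ⟨hd.ne'⟩
    obtain ⟨x, hx⟩ := hA 1
    obtain ⟨u, p, hp, hcop, hu⟩ :=
      exists_unit_mul_modEq_coprime_le_half (a := A 0 0) (x := x 0)
        (by simpa [mulVec, dotProduct] using hx 0)
    refine ⟨diagonal fun _ => (u : ℤ), p, by simp, hp, hcop, fun i j => ?_⟩
    fin_cases i; fin_cases j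
    simpa using hu
  | succ m ih =>
    obtain ⟨x, hx⟩ := hA (Pi.single 0 1)
    obtain ⟨P₁, hP₁, hrow⟩ :=
      exists_det_eq_one_vecMul_modEq_single Fin.zero_ne_one (d 0) (A 0)
        ⟨x, by simpa [mulVec] using hx 0⟩
    set B := A * P₁
    have hrowB : ∀ l, B 0 l ≡ (Pi.single 0 1 : Fin (m + 2) → ℤ) l [ZMOD d 0] := hrow
    have hC := (hA.mul_of_isUnit_det (P := P₁) (by simp [hP₁])).submatrix_succ
      (fun i => hchain 0 i.succ (Fin.zero_le _)) hrowB
    -- the first column of `bordered k Q` clears the first column of `B` below row `0`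
    obtain ⟨k, hk⟩ := hC fun i => -B i.succ 0
    obtain ⟨Q, p, hQ, hp, hcop, hCQ⟩ := ih (fun i => d i.succ) (by simpa using hd)
      (fun i j hij => hchain _ _ (Fin.succ_le_succ_iff.2 hij)) _ hC
    refine ⟨P₁ * bordered k Q, p, by simpa [hP₁, det_bordered] using hQ, by simpa using hp,
      by simpa using hcop, ?_⟩
    rw [← Matrix.mul_assoc]
    intro i j
    cases i using Fin.cases with
    | zero =>
      refine (dotProduct_modEq_of_modEq_single hrowB _).trans ?_
      rw [bordered_zero_apply]
      cases j using Fin.cases <;> simp [diagonal, (Fin.succ_ne_zero _).symm]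
    | succ i =>
      cases j using Fin.cases with
      | zero =>
        rw [mul_bordered_apply_zero]
        simpa [diagonal, Fin.succ_ne_zero, mulVec, dotProduct] using
          (hk i).add_left (B i.succ 0)
      | succ j =>
        rw [mul_bordered_apply_succ, ← Fin.succ_last]
        simpa [diagonal_apply, update_apply, mul_apply] using hCQ i j

theorem eq_of_modEqRows_diagonal_update_mul {ι : Type*} [Fintype ι] [DecidableEq ι]
    {N p₁ p₂ : ℕ} (a : ι) (hp₁ : p₁ ≤ N / 2) (hp₂ : p₂ ≤ N / 2) {P : Matrix ι ι ℤ}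
    (hP : IsUnit P.det)
    (h : ModEqRows (fun _ => N) (diagonal (update 1 a (p₁ : ℤ)) * P)
      (diagonal (update 1 a (p₂ : ℤ)))) : p₁ = p₂ := by
  have hdet : ((p₁ * P.det : ℤ) : ZMod N) = (p₂ : ZMod N) := by
    have hmap : (Int.castRingHom (ZMod N)).mapMatrix (diagonal (update 1 a (p₁ : ℤ)) * P) =
        (Int.castRingHom (ZMod N)).mapMatrix (diagonal (update 1 a (p₂ : ℤ))) := by
      ext i j
      exact (ZMod.intCast_eq_intCast_iff _ _ _).2 (h i j)
    have := congrArg det hmap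
    rw [← RingHom.map_det, ← RingHom.map_det, det_mul, det_diagonal, det_diagonal] at this
    simpa [Finset.prod_update_of_mem] using this
  -- `p ↦ |valMinAbs p|` recovers `p ≤ N / 2` and does not see the sign `det P = ±1`
  have hrepr : ∀ p ≤ N / 2, ((p : ZMod N).valMinAbs).natAbs = p := fun p hp => by
    rw [ZMod.valMinAbs_natCast_of_le_half hp, Int.natAbs_natCast]
  rw [← hrepr p₁ hp₁, ← hrepr p₂ hp₂, ← hdet]
  rcases Int.isUnit_iff.1 hP with h1 | h1 <;> simp [h1, ZMod.natAbs_valMinAbs_neg]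

theorem dvd_of_le_of_forall_succ_dvd {n : ℕ} {d : Fin (n + 1) → ℕ}
    (h : ∀ i : Fin n, d i.succ ∣ d i.castSucc) {i j : Fin (n + 1)} (hij : i ≤ j) : d j ∣ d i :=
  Associates.mk_le_mk_iff_dvd.1 <|
    (Fin.antitone_iff_succ_le (f := fun i => Associates.mk (d i))).2
      (fun i => Associates.mk_le_mk_iff_dvd.2 (h i)) hij

section Tuples

variable {G : Type*} [CommGroup G] {ι κ : Type*} [Fintype ι]

-- the paper's `σ^P`, for an arbitrary integer matrix `P`
def tuplePow (σ : ι → G) (P : Matrix ι κ ℤ) : κ → G :=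
  fun j => ∏ i, σ i ^ P i j

theorem prod_tuplePow_zpow [Fintype κ] (σ : ι → G) (A : Matrix ι κ ℤ) (x : κ → ℤ) :
    ∏ j, tuplePow σ A j ^ x j = ∏ i, σ i ^ (A *ᵥ x) i := by
  simp only [tuplePow, ← Finset.prod_zpow, ← _root_.zpow_mul]
  rw [Finset.prod_comm]
  simp [mulVec, dotProduct, Finset.prod_zpow_eq_zpow_sum]

theorem tuplePow_tuplePow [Fintype κ] {μ : Type*} (σ : ι → G) (A : Matrix ι κ ℤ)
    (B : Matrix κ μ ℤ) : tuplePow (tuplePow σ A) B = tuplePow σ (A * B) :=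
  funext fun j => prod_tuplePow_zpow σ A fun k => B k j

theorem tuplePow_diagonal_update_one [DecidableEq ι] (σ : ι → G) (a : ι) (p : ℕ) :
    tuplePow σ (diagonal (update 1 a (p : ℤ))) = update σ a (σ a ^ p) := by
  funext j
  rw [tuplePow, Finset.prod_eq_single j (fun i _ hij => by simp [hij]) (by simp)]
  obtain rfl | hj := eq_or_ne j a
  · simp
  · simp [hj]

theorem exists_tuplePow_eq_of_closure_eq_top {τ : ι → G}
    (hτ : Subgroup.closure (Set.range τ) = ⊤) (σ : κ → G) :
    ∃ A : Matrix ι κ ℤ, tuplePow τ A = σ := by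
  choose a ha using fun j =>
    Subgroup.mem_closure_range_iff_of_fintype.1 (hτ ▸ Subgroup.mem_top (σ j))
  exact ⟨Matrix.of fun i j => a j i, funext fun j => (ha j).symm⟩

theorem prod_zpow_eq_prod_zpow_iff {τ : ι → G} (hτ : iSupIndep fun i => Subgroup.zpowers (τ i))
    {x y : ι → ℤ} : ∏ i, τ i ^ x i = ∏ i, τ i ^ y i ↔ ∀ i, x i ≡ y i [ZMOD orderOf (τ i)] := by
  simp_rw [← zpow_eq_zpow_iff_modEq]
  refine ⟨fun h i => ?_, fun h => Finset.prod_congr rfl fun i _ => h i⟩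
  have hone := Subgroup.eq_one_of_noncommProd_eq_one_of_iSupIndep Finset.univ
    (fun i => τ i ^ x i / τ i ^ y i) (fun _ _ _ _ _ => Commute.all _ _) _ hτ
    (fun i _ => div_mem (Subgroup.zpow_mem_zpowers _ _) (Subgroup.zpow_mem_zpowers _ _))
    (by rw [Finset.noncommProd_eq_prod, Finset.prod_div_distrib, h, div_self']) i
    (Finset.mem_univ i)
  exact div_eq_one.1 hone

theorem tuplePow_eq_tuplePow_iff {τ : ι → G} (hτ : iSupIndep fun i => Subgroup.zpowers (τ i))
    {A B : Matrix ι κ ℤ} :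
    tuplePow τ A = tuplePow τ B ↔ ModEqRows (fun i => orderOf (τ i)) A B := by
  simp only [funext_iff, tuplePow, prod_zpow_eq_prod_zpow_iff hτ, ModEqRows]
  exact forall_comm

theorem surjModRows_of_closure_tuplePow_eq_top [Fintype κ] {τ : ι → G}
    (hτ : iSupIndep fun i => Subgroup.zpowers (τ i)) {A : Matrix ι κ ℤ}
    (hA : Subgroup.closure (Set.range (tuplePow τ A)) = ⊤) :
    SurjModRows (fun i => orderOf (τ i)) A := by
  intro t
  obtain ⟨x, hx⟩ :=
    Subgroup.mem_closure_range_iff_of_fintype.1 (hA ▸ Subgroup.mem_top (∏ i, τ i ^ t i))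
  refine ⟨x, (prod_zpow_eq_prod_zpow_iff hτ).1 ?_⟩
  rw [← prod_tuplePow_zpow, ← hx]

end Tuples

/-- Representatives of the orbits of `GLₙ(ℤ)` acting on generating `n`-tuples of a finite
abelian group `G`: if `G = ⟨τ₁⟩ × ⋯ × ⟨τₙ⟩` with `|τᵢ₊₁| ∣ |τᵢ|`, then every generating
tuple is in the orbit of some `(τ₁, …, τₙ₋₁, τₙ^p)` with `0 ≤ p ≤ ⌊|τₙ|/2⌋` and
`gcd(p, |τₙ|) = 1`, and distinct such `p` give distinct orbits. -/
theorem stmt4 {G : Type*} [CommGroup G] [Finite G] (n : ℕ)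
    (τ : Fin (n + 1) → G)
    (hindep : iSupIndep fun i => Subgroup.zpowers (τ i))
    (hsup : (⨆ i, Subgroup.zpowers (τ i)) = ⊤)
    (hdvd : ∀ i : Fin n, orderOf (τ i.succ) ∣ orderOf (τ i.castSucc)) :
    (∀ σ : Fin (n + 1) → G, Subgroup.closure (Set.range σ) = ⊤ →
      ∃ (P : Matrix (Fin (n + 1)) (Fin (n + 1)) ℤ) (p : ℕ), IsUnit P.det ∧
        p ≤ orderOf (τ (Fin.last n)) / 2 ∧
        Nat.gcd p (orderOf (τ (Fin.last n))) = 1 ∧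
        (fun j => ∏ i, σ i ^ P i j) =
          Function.update τ (Fin.last n) (τ (Fin.last n) ^ p)) ∧
    (∀ p₁ p₂ : ℕ,
      p₁ ≤ orderOf (τ (Fin.last n)) / 2 →
      Nat.gcd p₁ (orderOf (τ (Fin.last n))) = 1 →
      p₂ ≤ orderOf (τ (Fin.last n)) / 2 →
      Nat.gcd p₂ (orderOf (τ (Fin.last n))) = 1 →
      (∃ P : Matrix (Fin (n + 1)) (Fin (n + 1)) ℤ, IsUnit P.det ∧
        (fun j => ∏ i,
            (Function.update τ (Fin.last n) (τ (Fin.last n) ^ p₁)) i ^ P i j) =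
          Function.update τ (Fin.last n) (τ (Fin.last n) ^ p₂)) →
      p₁ = p₂) := by
  have hτ : Subgroup.closure (Set.range τ) = ⊤ := by
    rw [← hsup, ← Set.iUnion_singleton_eq_range, Subgroup.closure_iUnion]
    simp_rw [Subgroup.zpowers_eq_closure]
  have hchain : ∀ i j : Fin (n + 1), i ≤ j → orderOf (τ j) ∣ orderOf (τ i) :=
    fun _ _ => dvd_of_le_of_forall_succ_dvd (d := fun i => orderOf (τ i)) hdvd
  refine ⟨fun σ hσ => ?_, fun p₁ p₂ hp₁ _ hp₂ _ ⟨P, hP, h⟩ => ?_⟩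
  · obtain ⟨A, rfl⟩ := exists_tuplePow_eq_of_closure_eq_top hτ σ
    obtain ⟨P, p, hP, hp, hcop, hAP⟩ := exists_isUnit_det_mul_modEqRows_diagonal
      (fun i => orderOf (τ i)) (orderOf_pos _) hchain A
      (surjModRows_of_closure_tuplePow_eq_top hindep hσ)
    refine ⟨P, p, hP, hp, hcop, ?_⟩
    rw [← tuplePow_diagonal_update_one]
    exact (tuplePow_tuplePow τ A P).trans ((tuplePow_eq_tuplePow_iff hindep).2 hAP)
  · change tuplePow (update τ (Fin.last n) (τ (Fin.last n) ^ p₁)) P = _ at h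
    rw [← tuplePow_diagonal_update_one, ← tuplePow_diagonal_update_one, tuplePow_tuplePow,
      tuplePow_eq_tuplePow_iff hindep] at h
    exact eq_of_modEqRows_diagonal_update_mul _ hp₁ hp₂ hP
      (h.of_dvd fun i => hchain i _ (Fin.le_last i))
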